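/- arXiv:2601.22369 — 3 statements merged into one kernel-verified Lean document; each statement's English description precedes it below -/
import Mathlib

section
/- (Group Freezing Preserves Completeness.) Assume there exists a correct state machine (the setting is feasible). Let Sc be an admissible scenario (Sc ∈ Scen) such that C Sc = {d} is a singleton (Sc leads to a definite decision), and let T be a frozen path under Sc whose final outputs realize this decision, i.e., T (r−1) p = d p for every process p (where r−1 is the last round index). Then there exists a correct state machine SM that is compatible with T under Sc at every round: SM t p (fin t p) = T t p for all rounds t and all processes p. -/
/-- A scenario: initial states and a message-loss pattern. -/
structure Scenario (n r : ℕ) (S : Type) where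
  init : Fin n → S
  loss : Fin r → Fin n → Fin n → Bool

/-- Execution of a state machine `SM` under scenario `Sc`:
`run SM Sc 0 p = Sc.init p` and
`run SM Sc (t+1) p = SM t p (fun q => if Sc.loss t q p then none else some (run SM Sc t q))`
for `t < r` (beyond round `r` the state is just carried along). -/
def run {n r : ℕ} {S : Type} (SM : Fin r → Fin n → (Fin n → Option S) → S)
    (Sc : Scenario n r S) : ℕ → Fin n → S
  | 0, p => Sc.init p
  | t + 1, p =>
      if h : t < r then
        SM ⟨t, h⟩ p (fun q => if Sc.loss ⟨t, h⟩ q p then none else some (run SM Sc t q))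
      else run SM Sc t p

/-- The decision vector of `SM` under `Sc`. -/
def decision {n r : ℕ} {S : Type} (SM : Fin r → Fin n → (Fin n → Option S) → S)
    (Sc : Scenario n r S) : Fin n → S :=
  fun p => run SM Sc r p

/-- The frozen execution of a frozen path `T` under scenario `Sc`. -/
def fExec {n r : ℕ} {S : Type} (Sc : Scenario n r S) (T : Fin r → Fin n → S) :
    ℕ → Fin n → S
  | 0, p => Sc.init p
  | t + 1, p => if h : t < r then T ⟨t, h⟩ p else fExec Sc T t p

/-- The frozen input at round `t` and process `p`. -/
def fIn {n r : ℕ} {S : Type} (Sc : Scenario n r S) (T : Fin r → Fin n → S)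
    (t : Fin r) (p : Fin n) : Fin n → Option S :=
  fun q => if Sc.loss t q p then none else some (fExec Sc T t.val q)

/-! Relabel the states of a correct machine `SM` round by round by the permutations
`σ t q := swap (run SM Sc t q) (fExec Sc T t q)` for `t < r` and `σ r q := 1`. In every scenario
the relabeled machine runs through the images of the states of `SM`, so it takes the same decisions
and stays correct; under `Sc` its states before round `r` are the frozen ones, so it reproduces `T`
at all rounds but the last. At the last round it outputs the decision of `SM` under `Sc`, which is
`d = T (r - 1)` because `C Sc = {d}`. -/

section Relabel

variable {n r : ℕ} {S : Type}

theorem run_succ (SM : Fin r → Fin n → (Fin n → Option S) → S) (Sc : Scenario n r S)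
    (t : Fin r) (p : Fin n) :
    run SM Sc (t + 1) p =
      SM t p (fun q => if Sc.loss t q p then none else some (run SM Sc t q)) := by
  rw [run, dif_pos t.isLt]

theorem fExec_succ (Sc : Scenario n r S) (T : Fin r → Fin n → S) (t : Fin r) (p : Fin n) :
    fExec Sc T (t + 1) p = T t p := by
  rw [fExec, dif_pos t.isLt]

def relabel (SM : Fin r → Fin n → (Fin n → Option S) → S) (σ : ℕ → Fin n → Equiv.Perm S) :
    Fin r → Fin n → (Fin n → Option S) → S :=
  fun t p m => σ (t + 1) p (SM t p (fun q => (m q).map (σ t q).symm))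

theorem run_relabel (SM : Fin r → Fin n → (Fin n → Option S) → S)
    {σ : ℕ → Fin n → Equiv.Perm S} (hσ : ∀ q, σ 0 q = 1) (Sc : Scenario n r S) :
    ∀ t ≤ r, ∀ q, run (relabel SM σ) Sc t q = σ t q (run SM Sc t q) := by
  intro t ht
  induction t with
  | zero => intro q; simp [run, hσ]
  | succ t ih =>
    intro q
    have hlt : t < r := ht
    rw [run_succ _ _ ⟨t, hlt⟩, run_succ _ _ ⟨t, hlt⟩, relabel]
    congr 2
    funext q'
    split <;> simp [ih hlt.le]

theorem decision_relabel (SM : Fin r → Fin n → (Fin n → Option S) → S)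
    {σ : ℕ → Fin n → Equiv.Perm S} (hσ₀ : ∀ q, σ 0 q = 1) (hσᵣ : ∀ q, σ r q = 1)
    (Sc : Scenario n r S) :
    decision (relabel SM σ) Sc = decision SM Sc := by
  funext p
  simp [decision, run_relabel SM hσ₀ Sc r le_rfl, hσᵣ]

variable [DecidableEq S]

def freezingPerm (SM : Fin r → Fin n → (Fin n → Option S) → S) (Sc : Scenario n r S)
    (T : Fin r → Fin n → S) (t : ℕ) (q : Fin n) : Equiv.Perm S :=
  if t < r then Equiv.swap (run SM Sc t q) (fExec Sc T t q) else 1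

variable (SM : Fin r → Fin n → (Fin n → Option S) → S) (Sc : Scenario n r S)
  (T : Fin r → Fin n → S)

theorem freezingPerm_zero (q : Fin n) : freezingPerm SM Sc T 0 q = 1 := by
  unfold freezingPerm
  split
  · exact Equiv.swap_self _
  · rfl

theorem freezingPerm_of_le {t : ℕ} (ht : r ≤ t) (q : Fin n) : freezingPerm SM Sc T t q = 1 :=
  if_neg (not_lt.2 ht)

theorem freezingPerm_apply_run {t : ℕ} (ht : t < r) (q : Fin n) :
    freezingPerm SM Sc T t q (run SM Sc t q) = fExec Sc T t q := by
  rw [freezingPerm, if_pos ht, Equiv.swap_apply_left]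

theorem relabel_freezingPerm_fIn (t : Fin r) (p : Fin n) :
    relabel SM (freezingPerm SM Sc T) t p (fIn Sc T t p) =
      freezingPerm SM Sc T (t + 1) p (run SM Sc (t + 1) p) := by
  rw [relabel, run_succ]
  congr 2
  funext q
  rw [fIn, ← freezingPerm_apply_run SM Sc T t.isLt q]
  split <;> simp

end Relabel

/-- Group Freezing Preserves Completeness. -/
theorem stmt_1 (n r : ℕ) (hr : 1 ≤ r)
    (S : Type)
    (Scen : Set (Scenario n r S)) (C : Scenario n r S → Set (Fin n → S))
    (hfeas : ∃ SM : Fin r → Fin n → (Fin n → Option S) → S,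
      ∀ Sc ∈ Scen, decision SM Sc ∈ C Sc)
    (Sc : Scenario n r S) (hSc : Sc ∈ Scen)
    (d : Fin n → S) (hd : C Sc = {d})
    (T : Fin r → Fin n → S)
    (hT : ∀ p : Fin n, T ⟨r - 1, by omega⟩ p = d p) :
    ∃ SM : Fin r → Fin n → (Fin n → Option S) → S,
      (∀ Sc' ∈ Scen, decision SM Sc' ∈ C Sc') ∧
      ∀ (t : Fin r) (p : Fin n), SM t p (fIn Sc T t p) = T t p := by
  classical
  obtain ⟨SM, hSM⟩ := hfeas
  refine ⟨relabel SM (freezingPerm SM Sc T), fun Sc' hSc' => ?_, fun t p => ?_⟩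
  · rw [decision_relabel SM (freezingPerm_zero SM Sc T) (freezingPerm_of_le SM Sc T le_rfl)]
    exact hSM Sc' hSc'
  rw [relabel_freezingPerm_fIn]
  rcases Nat.lt_or_ge (t + 1) r with hlt | hge
  · rw [freezingPerm_apply_run SM Sc T hlt, fExec_succ]
  · have hdecide : decision SM Sc = d := by simpa [hd] using hSM Sc hSc
    have hlast : t = ⟨r - 1, by omega⟩ := Fin.ext (by have := t.isLt; simp only; omega)
    rw [freezingPerm_of_le SM Sc T hge, Equiv.Perm.one_apply,
      show (t : ℕ) + 1 = r by omega, hlast, hT, ← hdecide, decision]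
end

section
/- (Swap equivalence lemma.) Let SM be a state machine, let t be a round index with t+1 < r, let p be a process, and let B, C ∈ S with σ = Equiv.swap B C. Define a state machine SM' by: SM' t p v = σ (SM t p v) for every input v; SM' (t+1) q w = SM (t+1) q (Function.update w p ((w p).map σ)) for every process q and every input w (σ is an involution, so σ⁻¹ = σ); and SM' agrees with SM at all other (round, process) pairs. Then SM and SM' are equivalent: for every scenario, SM and SM' have the same decision vector. -/
section Execution

variable {n r : ℕ} {S : Type}

def received (Sc : Scenario n r S) (u : Fin r) (x : Fin n → S) (q : Fin n) : Fin n → Option S :=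
  fun q' => if Sc.loss u q' q then none else some (x q')

theorem run_succ_of_lt (SM : Fin r → Fin n → (Fin n → Option S) → S) (Sc : Scenario n r S)
    {m : ℕ} (h : m < r) (q : Fin n) :
    run SM Sc (m + 1) q = SM ⟨m, h⟩ q (received Sc ⟨m, h⟩ (run SM Sc m) q) := by
  rw [run, dif_pos h]
  rfl

theorem run_succ_of_le (SM : Fin r → Fin n → (Fin n → Option S) → S) (Sc : Scenario n r S)
    {m : ℕ} (h : r ≤ m) : run SM Sc (m + 1) = run SM Sc m := by
  funext q
  rw [run, dif_neg (not_lt.2 h)]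

theorem run_eq_of_agree {SM SM' : Fin r → Fin n → (Fin n → Option S) → S} {Sc : Scenario n r S}
    {a b : ℕ} (hab : a ≤ b) (ha : run SM Sc a = run SM' Sc a)
    (hagree : ∀ u : Fin r, a ≤ u.val → u.val < b → SM u = SM' u) :
    run SM Sc b = run SM' Sc b := by
  induction b, hab using Nat.le_induction with
  | base => exact ha
  | succ k hak ih =>
    have hk_eq := ih fun u hau hub => hagree u hau (by omega)
    by_cases hk : k < r
    · funext q
      rw [run_succ_of_lt SM Sc hk, run_succ_of_lt SM' Sc hk, hk_eq,
        hagree ⟨k, hk⟩ hak (Nat.lt_succ_self k)]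
    · rw [run_succ_of_le SM Sc (not_lt.1 hk), run_succ_of_le SM' Sc (not_lt.1 hk), hk_eq]

theorem update_map_received_update {σ : S → S} (hσ : Function.Involutive σ)
    (Sc : Scenario n r S) (u : Fin r) (x : Fin n → S) (p q : Fin n) :
    Function.update (received Sc u (Function.update x p (σ (x p))) q) p
        ((received Sc u (Function.update x p (σ (x p))) q p).map σ) =
      received Sc u x q := by
  funext q'
  by_cases hq' : q' = p
  · subst hq'
    by_cases hl : Sc.loss u q' q <;> simp [received, hl, hσ (x q')]
  · simp [received, hq']

end Execution

section SwapEquivalence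

variable {n r : ℕ} {S : Type} {SM SM' : Fin r → Fin n → (Fin n → Option S) → S} {σ : S → S}
  {t : Fin r} {p : Fin n}

theorem run_succ_eq_update_of_swap (Sc : Scenario n r S) (ht : t.val + 1 < r)
    (h1 : ∀ v : Fin n → Option S, SM' t p v = σ (SM t p v))
    (h3 : ∀ (u : Fin r) (q : Fin n), ¬(u = t ∧ q = p) → u ≠ ⟨t.val + 1, ht⟩ →
      ∀ v : Fin n → Option S, SM' u q v = SM u q v) :
    run SM' Sc (t.val + 1) =
      Function.update (run SM Sc (t.val + 1)) p (σ (run SM Sc (t.val + 1) p)) := by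
  have h_upto : run SM' Sc t.val = run SM Sc t.val :=
    run_eq_of_agree (Nat.zero_le _) rfl fun u _ hu => funext fun q => funext <|
      h3 u q (fun h => hu.ne (congrArg Fin.val h.1)) (fun h => by simp [h] at hu)
  funext q
  by_cases hq : q = p
  · subst hq
    rw [Function.update_self, run_succ_of_lt SM' Sc t.isLt, run_succ_of_lt SM Sc t.isLt, h_upto]
    exact h1 _
  · rw [Function.update_of_ne hq, run_succ_of_lt SM' Sc t.isLt, run_succ_of_lt SM Sc t.isLt,
      h_upto]
    exact h3 t q (fun h => hq h.2) (fun h => by simp [Fin.ext_iff] at h) _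

theorem run_succ_succ_eq_of_swap (Sc : Scenario n r S) (hσ : Function.Involutive σ)
    (ht : t.val + 1 < r)
    (h2 : ∀ (q : Fin n) (w : Fin n → Option S),
      SM' ⟨t.val + 1, ht⟩ q w = SM ⟨t.val + 1, ht⟩ q (Function.update w p ((w p).map σ)))
    (h_swap : run SM' Sc (t.val + 1) =
      Function.update (run SM Sc (t.val + 1)) p (σ (run SM Sc (t.val + 1) p))) :
    run SM' Sc (t.val + 2) = run SM Sc (t.val + 2) := by
  funext q
  rw [run_succ_of_lt SM' Sc ht, run_succ_of_lt SM Sc ht, h2, h_swap,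
    update_map_received_update hσ]

end SwapEquivalence

theorem stmt_2_general (n r : ℕ)
    (S : Type) [DecidableEq S]
    (SM SM' : Fin r → Fin n → (Fin n → Option S) → S)
    (t : Fin r) (ht : t.val + 1 < r) (p : Fin n)
    (B C : S) (σ : Equiv.Perm S) (hσ : σ = Equiv.swap B C)
    (h1 : ∀ v : Fin n → Option S, SM' t p v = σ (SM t p v))
    (h2 : ∀ (q : Fin n) (w : Fin n → Option S),
      SM' ⟨t.val + 1, ht⟩ q w =
        SM ⟨t.val + 1, ht⟩ q (Function.update w p ((w p).map (fun x => σ x))))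
    (h3 : ∀ (u : Fin r) (q : Fin n), ¬(u = t ∧ q = p) → u ≠ ⟨t.val + 1, ht⟩ →
      ∀ v : Fin n → Option S, SM' u q v = SM u q v) :
    ∀ Sc : Scenario n r S, decision SM Sc = decision SM' Sc := by
  intro Sc
  have hσ_inv : Function.Involutive σ := hσ ▸ Equiv.swap_apply_self B C
  have h_after : run SM' Sc (t.val + 2) = run SM Sc (t.val + 2) :=
    run_succ_succ_eq_of_swap Sc hσ_inv ht h2 (run_succ_eq_update_of_swap Sc ht h1 h3)
  refine (run_eq_of_agree (by omega) h_after fun u hu _ => ?_).symm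
  funext q v
  exact h3 u q (fun h => by simp [h] at hu) (fun h => by simp [h] at hu) v

/-- Swap equivalence lemma. -/
theorem stmt_2 (n r : ℕ) (hn : 1 ≤ n) (hr : 1 ≤ r)
    (S : Type) [Fintype S] [Nonempty S] [DecidableEq S]
    (SM SM' : Fin r → Fin n → (Fin n → Option S) → S)
    (t : Fin r) (ht : t.val + 1 < r) (p : Fin n)
    (B C : S) (σ : Equiv.Perm S) (hσ : σ = Equiv.swap B C)
    (h1 : ∀ v : Fin n → Option S, SM' t p v = σ (SM t p v))
    (h2 : ∀ (q : Fin n) (w : Fin n → Option S),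
      SM' ⟨t.val + 1, ht⟩ q w =
        SM ⟨t.val + 1, ht⟩ q (Function.update w p ((w p).map (fun x => σ x))))
    (h3 : ∀ (u : Fin r) (q : Fin n), ¬(u = t ∧ q = p) → u ≠ ⟨t.val + 1, ht⟩ →
      ∀ v : Fin n → Option S, SM' u q v = SM u q v) :
    ∀ Sc : Scenario n r S, decision SM Sc = decision SM' Sc :=
  stmt_2_general n r S SM SM' t ht p B C σ hσ h1 h2 h3
end

section
/- (Existence of a failure-free round.) Let f be a natural number with r = f + 1, and let crash : Fin n → Option (Fin r) be a crash pattern such that the set of faulty processes {q | crash q ≠ none} has cardinality at most f. Then some round is failure-free: there exists t : Fin r such that crash q ≠ some t for every process q. -/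
open Finset

theorem Option.exists_forall_ne_some_of_card_lt {α β : Type*} [Fintype α] [Fintype β]
    (g : α → Option β) (h : #{a | g a ≠ none} < Fintype.card β) :
    ∃ b, ∀ a, g a ≠ some b := by
  by_contra! hattained
  choose preimage hpreimage using hattained
  have hinj : Set.InjOn preimage (univ : Finset β) := fun b _ c _ hbc =>
    Option.some_injective _ ((hpreimage b).symm.trans (hbc ▸ hpreimage c))
  have hcard : Fintype.card β ≤ #{a | g a ≠ none} := by
    simpa using card_le_card_of_injOn preimage (fun b _ => by simp [hpreimage b]) hinj
  omega

/-- Existence of a failure-free round. -/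
theorem stmt_5 (n f r : ℕ) (hr : r = f + 1)
    (crash : Fin n → Option (Fin r))
    (h : (Finset.univ.filter fun q => crash q ≠ none).card ≤ f) :
    ∃ t : Fin r, ∀ q : Fin n, crash q ≠ some t :=
  Option.exists_forall_ne_some_of_card_lt crash (by rw [Fintype.card_fin]; omega)
end
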